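/- arXiv:2105.11992 — 7 statements merged into one kernel-verified Lean document; each statement's English description precedes it below -/
import Mathlib

section
/- Let A be a finite set with |A| > k ≥ 1, x : A → [0,1], and e ∈ A. With q_A(B) = (1/C(|A|,k)) · (1 + x(A\B)/(|A|-k) − x(B)/k) for k-subsets B of A, we have ∑_{B ⊆ A, |B|=k, e ∈ B} q_A(B) = (k − x_e)/|A| + x(A\{e})/(|A|(|A|−1)). -/
/-!
Since `x(A \ B) = x(A) - x(B)`, the weight `q_A(B)` is affine in `x(B)`, so the sum only involves
the number `C(n-1, k-1)` of `k`-sets through `e` and the sum of `x(B)` over them. Double counting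
pairs `i ∈ B` gives `(n-1) ∑_{B ∋ e} x(B) = C(n-1, k-1) ((n-1) x_e + (k-1) x(A \ {e}))`, and with
`n C(n-1, k-1) = k C(n, k)` what is left is an identity of rational functions in `n` and `k`.
-/

open Finset

namespace Finset

variable {α : Type*}

lemma filter_mem_powersetCard_succ [DecidableEq α] {s : Finset α} {a : α} (ha : a ∈ s) (n : ℕ) :
    {B ∈ s.powersetCard (n + 1) | a ∈ B} = ((s.erase a).powersetCard n).image (insert a) := by
  simpa [sdiff_singleton_eq_erase, union_comm, ← insert_eq] using
    filter_powersetCard_subset {a} s (n + 1) (singleton_subset_iff.2 ha) (by simp)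

lemma sum_filter_mem_powersetCard_succ [DecidableEq α] {M : Type*} [AddCommMonoid M]
    {s : Finset α} {a : α} (ha : a ∈ s) (n : ℕ) (f : Finset α → M) :
    ∑ B ∈ s.powersetCard (n + 1) with a ∈ B, f B
      = ∑ C ∈ (s.erase a).powersetCard n, f (insert a C) := by
  rw [filter_mem_powersetCard_succ ha, sum_image]
  intro C hC D hD hCD
  have hnot : ∀ {E}, E ∈ ((s.erase a).powersetCard n : Set (Finset α)) → a ∉ E :=
    fun hE haE => notMem_erase a s ((mem_powersetCard.1 hE).1 haE)
  rw [← erase_insert (hnot hC), ← erase_insert (hnot hD), hCD]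

lemma card_filter_mem_powersetCard_succ [DecidableEq α] {s : Finset α} {a : α} (ha : a ∈ s)
    (n : ℕ) : #{B ∈ s.powersetCard (n + 1) | a ∈ B} = (#s - 1).choose n := by
  simpa using card_filter_powersetCard_subset {a} s (n + 1) (singleton_subset_iff.2 ha) (by simp)

lemma sum_powersetCard_succ_sum {M : Type*} [AddCommMonoid M] (s : Finset α) (n : ℕ)
    (f : α → M) :
    ∑ B ∈ s.powersetCard (n + 1), ∑ i ∈ B, f i = (#s - 1).choose n • ∑ i ∈ s, f i := by
  classical
  rw [sum_comm' (t' := s) (s' := fun i => {B ∈ s.powersetCard (n + 1) | i ∈ B}), smul_sum]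
  · exact sum_congr rfl fun i hi => by rw [sum_const, card_filter_mem_powersetCard_succ hi]
  · intro B i
    simp only [mem_filter, mem_powersetCard]
    exact ⟨fun h => ⟨⟨h.1, h.2⟩, h.1.1 h.2⟩, fun h => h.1⟩

lemma card_smul_sum_powersetCard_sum {M : Type*} [AddCommMonoid M] (s : Finset α) (k : ℕ)
    (f : α → M) :
    #s • ∑ B ∈ s.powersetCard k, ∑ i ∈ B, f i = (k * (#s).choose k) • ∑ i ∈ s, f i := by
  rcases k with _ | n
  · simp
  rw [sum_powersetCard_succ_sum, smul_smul]
  congr 1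
  rcases hs : #s with _ | m
  · simp
  simpa [mul_comm] using Nat.add_one_mul_choose_eq m n

lemma card_erase_smul_sum_filter_mem_powersetCard_succ_sum [DecidableEq α] {M : Type*}
    [AddCommMonoid M] {s : Finset α} {a : α} (ha : a ∈ s) (k : ℕ) (f : α → M) :
    #(s.erase a) • ∑ B ∈ s.powersetCard (k + 1) with a ∈ B, ∑ i ∈ B, f i
      = (#(s.erase a)).choose k • (#(s.erase a) • f a + k • ∑ i ∈ s.erase a, f i) := by
  have hsum : ∀ C ∈ (s.erase a).powersetCard k, ∑ i ∈ insert a C, f i = f a + ∑ i ∈ C, f i :=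
    fun C hC => sum_insert fun haC => notMem_erase a s ((mem_powersetCard.1 hC).1 haC)
  rw [sum_filter_mem_powersetCard_succ ha, sum_congr rfl hsum, sum_add_distrib, sum_const,
    card_powersetCard, smul_add, card_smul_sum_powersetCard_sum, smul_add, smul_comm, mul_comm,
    mul_smul]

end Finset

theorem stmt2_general {ι : Type*} [DecidableEq ι] (A : Finset ι) (k : ℕ) (hk1 : 1 ≤ k)
    (hk2 : k < A.card) (x : ι → ℝ)
    (e : ι) (he : e ∈ A) :
    ∑ B ∈ (A.powersetCard k).filter (fun B => e ∈ B),
      (1 / (A.card.choose k : ℝ)) *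
        (1 + (∑ i ∈ A \ B, x i) / ((A.card : ℝ) - k) - (∑ i ∈ B, x i) / k)
      = ((k : ℝ) - x e) / A.card
        + (∑ i ∈ A.erase e, x i) / ((A.card : ℝ) * ((A.card : ℝ) - 1)) := by
  obtain ⟨j, rfl⟩ : ∃ j, k = j + 1 := ⟨k - 1, by omega⟩
  have hcard : #A = #(A.erase e) + 1 := (card_erase_add_one he).symm
  set m := #(A.erase e)
  rw [hcard] at hk2 ⊢
  set c : ℝ := 1 / ((m + 1).choose (j + 1) : ℝ)
  set d : ℝ := ((m + 1 : ℕ) : ℝ) - (j + 1 : ℕ)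
  have hterm : ∀ B ∈ {B ∈ A.powersetCard (j + 1) | e ∈ B},
      c * (1 + (∑ i ∈ A \ B, x i) / d - (∑ i ∈ B, x i) / (j + 1 : ℕ))
        = c * (1 + (∑ i ∈ A, x i) / d) - c * (1 / d + 1 / (j + 1 : ℕ)) * ∑ i ∈ B, x i := by
    intro B hB
    rw [sum_sdiff_eq_sub (mem_powersetCard.1 (mem_filter.1 hB).1).1]
    ring
  rw [sum_congr rfl hterm, sum_sub_distrib, sum_const, ← mul_sum,
    card_filter_mem_powersetCard_succ he, hcard, Nat.add_sub_cancel, nsmul_eq_mul,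
    ← add_sum_erase A x he]
  have hT : (m : ℝ) * ∑ B ∈ A.powersetCard (j + 1) with e ∈ B, ∑ i ∈ B, x i
      = m.choose j * (m * x e + j * ∑ i ∈ A.erase e, x i) := by
    simpa only [nsmul_eq_mul, Nat.cast_mul] using
      card_erase_smul_sum_filter_mem_powersetCard_succ_sum he j x
  have hchoose : ((m + 1 : ℕ) : ℝ) * m.choose j = (m + 1).choose (j + 1) * (j + 1 : ℕ) := by
    exact_mod_cast Nat.add_one_mul_choose_eq m j
  have hm : (m : ℝ) ≠ 0 := Nat.cast_ne_zero.2 (by omega)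
  have hmj : (m : ℝ) - j ≠ 0 := sub_ne_zero.2 (by exact_mod_cast (show j < m by omega).ne')
  have hbinom : ((m + 1).choose (j + 1) : ℝ) ≠ 0 := by
    exact_mod_cast (Nat.choose_pos (by omega)).ne'
  rw [eq_div_of_mul_eq hm ((mul_comm _ _).trans hT),
    eq_div_of_mul_eq (by positivity) ((mul_comm _ _).trans hchoose)]
  simp only [c, d]
  push_cast
  rw [add_sub_cancel_right, add_sub_add_right_eq_sub]
  field_simp
  ring

theorem stmt2 {ι : Type*} [DecidableEq ι] (A : Finset ι) (k : ℕ) (hk1 : 1 ≤ k)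
    (hk2 : k < A.card) (x : ι → ℝ) (hx : ∀ i ∈ A, x i ∈ Set.Icc (0:ℝ) 1)
    (e : ι) (he : e ∈ A) :
    ∑ B ∈ (A.powersetCard k).filter (fun B => e ∈ B),
      (1 / (A.card.choose k : ℝ)) *
        (1 + (∑ i ∈ A \ B, x i) / ((A.card : ℝ) - k) - (∑ i ∈ B, x i) / k)
      = ((k : ℝ) - x e) / A.card
        + (∑ i ∈ A.erase e, x i) / ((A.card : ℝ) * ((A.card : ℝ) - 1)) :=
  stmt2_general A k hk1 hk2 x e he
end

section
/- Define α(k,n) = k · C(n,k) · (1−k/n)^{n+1−k} · (k/n)^k for integers 0 ≤ k ≤ n (with α(0,m) = 0). For all n ≥ 2 and 1 ≤ k ≤ n−1 with k > 1, α(k,n) > α(k−1,n−1). -/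
/-! With `k = j + 1` and `n = m + 1`, both `α(j, m)` and `α(j + 1, m + 1)` are
`C(m, j) (m - j)^(m + 1 - j)` times `j^(j+1) / m^(m+1)`, resp. `(j+1)^(j+1) / (m+1)^(m+1)`, because
`(j + 1) C(m + 1, j + 1) = (m + 1) C(m, j)`. The claim therefore says that `(1 + 1/m)^(m+1)` is
strictly decreasing, and one step of that is Bernoulli's inequality for
`((m + 1)^2)^(m+1) = (m (m + 2) + 1)^(m+1)`. -/

noncomputable def alpha (k n : ℕ) : ℝ :=
  (k : ℝ) * ((n.choose k : ℕ) : ℝ) * (1 - (k:ℝ)/n)^(n+1-k) * ((k:ℝ)/n)^k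

lemma pow_succ_mul_pow_lt_pow {m : ℕ} (hm : 0 < m) :
    (m:ℝ)^(m+1) * ((m:ℝ)+2)^(m+2) < ((m:ℝ)+1)^(2*m+3) := by
  obtain ⟨A, hA⟩ : ∃ A : ℝ, A = m * (m + 2) := ⟨_, rfl⟩
  have hA_pos : 0 < A := by rw [hA]; positivity
  have hA_succ : A + 1 = ((m:ℝ)+1)^2 := by rw [hA]; ring
  have bernoulli : A^(m+1) + (m+1) * A^m ≤ (A+1)^(m+1) := by
    simpa using pow_add_mul_le_add_pow hA_pos.le (by linarith : 0 ≤ 2 * A + 1) (m+1)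
  calc (m:ℝ)^(m+1) * ((m:ℝ)+2)^(m+2) = ((m:ℝ)+2) * A^(m+1) := by rw [hA, mul_pow]; ring
    _ < ((m:ℝ)+2) * A^(m+1) + A^m := by linarith [pow_pos hA_pos m]
    _ = ((m:ℝ)+1) * (A^(m+1) + (m+1) * A^m) := by
        rw [pow_succ]; linear_combination (A^m) * hA_succ
    _ ≤ ((m:ℝ)+1) * (A+1)^(m+1) := by gcongr
    _ = ((m:ℝ)+1)^(2*m+3) := by rw [hA_succ, ← pow_mul]; ring

lemma strictAntiOn_add_one_pow_div_pow :
    StrictAntiOn (fun m : ℕ => ((m:ℝ)+1)^(m+1) / (m:ℝ)^(m+1)) (Set.Ici 1) := by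
  have step : ∀ m : ℕ, 1 ≤ m →
      ((m:ℝ)+1)^(m+1) / (m:ℝ)^(m+1) > (((m+1 : ℕ):ℝ)+1)^(m+1+1) / ((m+1 : ℕ):ℝ)^(m+1+1) := by
    intro m hm
    push_cast
    rw [gt_iff_lt, div_lt_div_iff₀ (by positivity) (by positivity)]
    calc ((m:ℝ)+1+1)^(m+1+1) * m^(m+1) = m^(m+1) * (m+2)^(m+2) := by ring
      _ < ((m:ℝ)+1)^(2*m+3) := pow_succ_mul_pow_lt_pow hm
      _ = ((m:ℝ)+1)^(m+1) * ((m:ℝ)+1)^(m+1+1) := by ring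
  exact fun i hi j _ hij => Nat.rel_of_forall_rel_succ_of_le_of_lt (· > ·) step hi hij

lemma alpha_mul_eq {j m : ℕ} (hm : 0 < m) (hjm : j ≤ m) :
    alpha j m * (((j:ℝ)+1)^(j+1) * (m:ℝ)^(m+1))
      = alpha (j+1) (m+1) * ((j:ℝ)^(j+1) * ((m:ℝ)+1)^(m+1)) := by
  obtain ⟨d, rfl⟩ := Nat.exists_eq_add_of_le hjm
  have hchoose : ((j + d + 1) : ℝ) * (j + d).choose j = (j + d + 1).choose (j + 1) * (j + 1) := by
    exact_mod_cast Nat.add_one_mul_choose_eq (j + d) j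
  have hm' : (j:ℝ) + d ≠ 0 := by exact_mod_cast hm.ne'
  unfold alpha
  rw [show j + d + 1 - j = d + 1 by omega, show j + d + 1 + 1 - (j+1) = d + 1 by omega]
  push_cast
  rw [show 1 - (j:ℝ) / (j + d) = d / (j + d) by field_simp; ring,
    show 1 - ((j:ℝ) + 1) / (j + d + 1) = d / (j + d + 1) by field_simp; ring]
  simp only [div_pow]
  field_simp
  linear_combination ((j:ℝ)^(j+1) * d^(d+1) * (j+d)^(j+d+1) * (j+d+1)^(j+d+1)) * hchoose

lemma alpha_pos {k n : ℕ} (hk : 0 < k) (hkn : k < n) : 0 < alpha k n := by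
  have hk' : (0:ℝ) < k := by exact_mod_cast hk
  have hkn' : (k:ℝ) < n := by exact_mod_cast hkn
  have hcompl : 0 < 1 - (k:ℝ) / n := by rw [sub_pos, div_lt_one (by linarith)]; exact hkn'
  have hchoose : 0 < ((n.choose k : ℕ) : ℝ) := by exact_mod_cast Nat.choose_pos hkn.le
  unfold alpha
  exact mul_pos (mul_pos (mul_pos hk' hchoose) (pow_pos hcompl _))
    (pow_pos (div_pos hk' (by linarith)) _)

lemma alpha_lt_alpha_succ_succ {j m : ℕ} (hj : 0 < j) (hjm : j < m) :
    alpha j m < alpha (j+1) (m+1) := by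
  have hj' : (0:ℝ) < j := by exact_mod_cast hj
  have hm' : (0:ℝ) < m := by exact_mod_cast hj.trans hjm
  have hdecr := strictAntiOn_add_one_pow_div_pow hj (hj.trans hjm) hjm
  rw [div_lt_div_iff₀ (by positivity) (by positivity)] at hdecr
  have hP : (0:ℝ) < ((j:ℝ)+1)^(j+1) * (m:ℝ)^(m+1) := by positivity
  refine lt_of_mul_lt_mul_right ?_ hP.le
  rw [alpha_mul_eq (hj.trans hjm) hjm.le]
  exact mul_lt_mul_of_pos_left (by linarith) (alpha_pos j.succ_pos (Nat.succ_lt_succ hjm))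

theorem stmt6_general (n k : ℕ) (hk : 1 < k) (hk2 : k ≤ n - 1) :
    ((k:ℝ) - 1) * (((n-1).choose (k-1) : ℕ) : ℝ)
        * (1 - ((k:ℝ)-1)/((n:ℝ)-1))^((n-1)+1-(k-1)) * (((k:ℝ)-1)/((n:ℝ)-1))^(k-1)
    < (k : ℝ) * ((n.choose k : ℕ) : ℝ) * (1 - (k:ℝ)/n)^(n+1-k) * ((k:ℝ)/n)^k := by
  have h := alpha_lt_alpha_succ_succ (j := k - 1) (m := n - 1) (by omega) (by omega)
  rw [Nat.sub_add_cancel (by omega : 1 ≤ k), Nat.sub_add_cancel (by omega : 1 ≤ n)] at h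
  unfold alpha at h
  rwa [Nat.cast_pred (by omega), Nat.cast_pred (by omega)] at h

theorem stmt6 (n k : ℕ) (hn : 2 ≤ n) (hk : 1 < k) (hk2 : k ≤ n - 1) :
    ((k:ℝ) - 1) * (((n-1).choose (k-1) : ℕ) : ℝ)
        * (1 - ((k:ℝ)-1)/((n:ℝ)-1))^((n-1)+1-(k-1)) * (((k:ℝ)-1)/((n:ℝ)-1))^(k-1)
    < (k : ℝ) * ((n.choose k : ℕ) : ℝ) * (1 - (k:ℝ)/n)^(n+1-k) * ((k:ℝ)/n)^k :=
  stmt6_general n k hk hk2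
end

section
/- Define α(k,n) = k · C(n,k) · (1−k/n)^{n+1−k} · (k/n)^k. For all n ≥ 3 and 1 ≤ k ≤ n−2, α(k,n) > α(k,n−1). -/
/-!
Since `C(n-1,k) = C(n,k) (1 - k/n)`, both sides share the factor `k C(n,k) (1 - k/n)`, and the
claim becomes `y^k (1-y)^(n-k) < x^k (1-x)^(n-k)` for `x = k/n`, `y = k/(n-1)`. This holds because
`t ↦ t^k (1-t)^(n-k)` has its unique maximum on `(0,1)` at `t = k/n`.
-/

open Real

theorem pow_mul_one_sub_pow_lt_of_ne {k m : ℕ} (hk : 0 < k) (hm : 0 < m) {t : ℝ} (ht0 : 0 < t)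
    (ht1 : t < 1) (ht : t ≠ k / (k + m)) :
    t ^ k * (1 - t) ^ m < (k / (k + m)) ^ k * (1 - k / (k + m)) ^ m := by
  set a : ℝ := k / (k + m) with ha
  have hk' : (0 : ℝ) < k := by exact_mod_cast hk
  have hm' : (0 : ℝ) < m := by exact_mod_cast hm
  have hka : k / a = k + m := by rw [ha]; field_simp
  have hma : m / (1 - a) = k + m := by rw [ha]; field_simp [hm'.ne']; ring
  have ha0 : 0 < a := by positivity
  have ha1 : 0 < 1 - a := by rw [ha, sub_pos, div_lt_one (by positivity)]; linarith
  -- Gibbs: `k log (t/a) + m log ((1-t)/(1-a)) < k (t/a - 1) + m ((1-t)/(1-a) - 1) = 0`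
  have hlog_t : log (t / a) < t / a - 1 :=
    log_lt_sub_one_of_pos (by positivity) (by rwa [ne_eq, div_eq_one_iff_eq ha0.ne'])
  have hlog_s : log ((1 - t) / (1 - a)) ≤ (1 - t) / (1 - a) - 1 :=
    log_le_sub_one_of_pos (div_pos (by linarith) ha1)
  have hsum : k * (t / a - 1) + m * ((1 - t) / (1 - a) - 1) = 0 := by
    have h1 : k * (t / a) = (k / a) * t := by ring
    have h2 : m * ((1 - t) / (1 - a)) = (m / (1 - a)) * (1 - t) := by ring
    linear_combination h1 + h2 + (t * hka) + ((1 - t) * hma)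
  rw [← log_lt_log_iff (by positivity) (by positivity), log_mul (by positivity) (by positivity),
    log_mul (by positivity) (by positivity), log_pow, log_pow, log_pow, log_pow]
  rw [log_div ht0.ne' ha0.ne'] at hlog_t
  rw [log_div (by linarith) ha1.ne'] at hlog_s
  linarith [mul_lt_mul_of_pos_left hlog_t hk', mul_le_mul_of_nonneg_left hlog_s hm'.le]

theorem cast_choose_pred_eq {n : ℕ} (k : ℕ) (hn : 0 < n) :
    (((n - 1).choose k : ℕ) : ℝ) = n.choose k * (1 - k / n) := by
  obtain ⟨n, rfl⟩ := Nat.exists_eq_succ_of_ne_zero hn.ne'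
  have h := congrArg (Nat.cast (R := ℝ)) (Nat.choose_mul_succ_eq n k)
  rcases le_or_gt k (n + 1) with hkn | hkn
  · push_cast [Nat.cast_sub hkn] at h ⊢
    field_simp
    linear_combination h
  · simp [Nat.choose_eq_zero_of_lt (by omega : n < k), Nat.choose_eq_zero_of_lt hkn]

theorem stmt7_general (n k : ℕ) (hk : 1 ≤ k) (hk2 : k ≤ n - 2) :
    (k : ℝ) * (((n-1).choose k : ℕ) : ℝ)
        * (1 - (k:ℝ)/((n:ℝ)-1))^((n-1)+1-k) * ((k:ℝ)/((n:ℝ)-1))^k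
    < (k : ℝ) * ((n.choose k : ℕ) : ℝ) * (1 - (k:ℝ)/n)^(n+1-k) * ((k:ℝ)/n)^k := by
  have hkn : k + 2 ≤ n := by omega
  have hnR : (n : ℝ) = k + (n - k : ℕ) := by push_cast [Nat.cast_sub (by omega : k ≤ n)]; ring
  have hk2R : (k : ℝ) + 2 ≤ n := by exact_mod_cast hkn
  have hkR : (0 : ℝ) < k := by exact_mod_cast hk
  have hmax : (k / (n - 1) : ℝ) ^ k * (1 - k / (n - 1)) ^ (n - k)
      < (k / n : ℝ) ^ k * (1 - k / n) ^ (n - k) := by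
    rw [hnR]
    refine pow_mul_one_sub_pow_lt_of_ne hk (by omega) ?_ ?_ ?_
    · rw [← hnR]; exact div_pos hkR (by linarith)
    · rw [← hnR, div_lt_one (by linarith)]; linarith
    · rw [← hnR, ne_eq, div_eq_div_iff (by linarith) (by linarith)]; nlinarith
  have hfactor : (0 : ℝ) < k * n.choose k * (1 - k / n) := by
    have : (0 : ℝ) < n.choose k := by exact_mod_cast Nat.choose_pos (by omega)
    have : (k : ℝ) / n < 1 := by rw [div_lt_one (by linarith)]; linarith
    have : (0 : ℝ) < 1 - k / n := by linarith
    positivity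
  rw [cast_choose_pred_eq k (by omega), show n - 1 + 1 - k = n - k by omega,
    show n + 1 - k = n - k + 1 by omega]
  calc _ = (k * n.choose k * (1 - k / n))
          * ((k / (n - 1) : ℝ) ^ k * (1 - k / (n - 1)) ^ (n - k)) := by ring
    _ < (k * n.choose k * (1 - k / n)) * ((k / n : ℝ) ^ k * (1 - k / n) ^ (n - k)) :=
        mul_lt_mul_of_pos_left hmax hfactor
    _ = _ := by ring

theorem stmt7 (n k : ℕ) (hn : 3 ≤ n) (hk : 1 ≤ k) (hk2 : k ≤ n - 2) :
    (k : ℝ) * (((n-1).choose k : ℕ) : ℝ)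
        * (1 - (k:ℝ)/((n:ℝ)-1))^((n-1)+1-k) * ((k:ℝ)/((n:ℝ)-1))^k
    < (k : ℝ) * ((n.choose k : ℕ) : ℝ) * (1 - (k:ℝ)/n)^(n+1-k) * ((k:ℝ)/n)^k :=
  stmt7_general n k hk hk2
end

section
/- Let S be a finite set, x : S → [0,1], and for A ⊆ S let p_S(A) = ∏_{i∈A} x_i · ∏_{i∈S\A} (1−x_i). Define h_S^k(x) = ∑_{A⊆S, |A|=k} p_S(A)·(k − x(A)) and Q_S^k(x) = ∑_{A⊆S, |A|=k} p_S(A). Then for 1 ≤ k ≤ |S|, h_S^k(x) − h_S^{k−1}(x) = Q_S^{k−1}(x)·(x(S) − (k−1)). -/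
/-!
Writing `k - x(A) = ∑_{i ∈ A} (1 - x_i)` for `|A| = k`, the sum `h_S^k` runs over pairs `(A, i)` with
`i ∈ A`. Removing `i` from `A` moves the factor `1 - x_i` of `p_S(A)` to a factor `x_i`, i.e.
`p_S(A) (1 - x_i) = p_S(A \ {i}) x_i`, so `h_S^k = ∑_{|B| = k-1} p_S(B) (x(S) - x(B))`. Subtracting
`h_S^{k-1}` termwise leaves `p_S(B) (x(S) - (k-1))`.
-/

open Finset

theorem Finset.sum_powersetCard_succ_sum_erase {α M : Type*} [DecidableEq α] [AddCommMonoid M]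
    (S : Finset α) (n : ℕ) (f : Finset α → α → M) :
    ∑ A ∈ S.powersetCard (n + 1), ∑ i ∈ A, f (A.erase i) i
      = ∑ B ∈ S.powersetCard n, ∑ i ∈ S \ B, f B i := by
  rw [sum_sigma', sum_sigma']
  refine sum_nbij' (fun a => ⟨a.1.erase a.2, a.2⟩) (fun b => ⟨insert b.2 b.1, b.2⟩)
    ?_ ?_ ?_ ?_ ?_
  · rintro ⟨A, i⟩ h
    simp only [mem_sigma, mem_powersetCard, mem_sdiff] at h ⊢
    obtain ⟨⟨hAS, hAc⟩, hi⟩ := h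
    exact ⟨⟨(erase_subset i A).trans hAS, by rw [card_erase_of_mem hi, hAc]; rfl⟩,
      hAS hi, notMem_erase i A⟩
  · rintro ⟨B, i⟩ h
    simp only [mem_sigma, mem_powersetCard, mem_sdiff] at h ⊢
    obtain ⟨⟨hBS, hBc⟩, hiS, hiB⟩ := h
    exact ⟨⟨insert_subset hiS hBS, by rw [card_insert_of_notMem hiB, hBc]⟩, mem_insert_self i B⟩
  · rintro ⟨A, i⟩ h
    simp only [mem_sigma] at h
    simp [insert_erase h.2]
  · rintro ⟨B, i⟩ h
    simp only [mem_sigma, mem_sdiff] at h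
    simp [erase_insert h.2.2]
  · intro _ _
    rfl

section SubsetProb

variable {ι R : Type*} [DecidableEq ι] [CommRing R]

def subsetProb (S : Finset ι) (x : ι → R) (A : Finset ι) : R :=
  (∏ i ∈ A, x i) * ∏ i ∈ S \ A, (1 - x i)

theorem subsetProb_mul_one_sub {S A : Finset ι} (x : ι → R) {i : ι} (hAS : A ⊆ S) (hi : i ∈ A) :
    subsetProb S x A * (1 - x i) = subsetProb S x (A.erase i) * x i := by
  rw [subsetProb, subsetProb, ← mul_prod_erase A x hi, sdiff_erase (hAS hi),
    prod_insert (notMem_sdiff_of_mem_right hi)]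
  ring

theorem sum_powersetCard_succ_subsetProb_mul (S : Finset ι) (x : ι → R) (n : ℕ) :
    ∑ A ∈ S.powersetCard (n + 1), subsetProb S x A * ((n + 1 : R) - ∑ i ∈ A, x i)
      = ∑ B ∈ S.powersetCard n, subsetProb S x B * ((∑ i ∈ S, x i) - ∑ i ∈ B, x i) := by
  calc ∑ A ∈ S.powersetCard (n + 1), subsetProb S x A * ((n + 1 : R) - ∑ i ∈ A, x i)
      = ∑ A ∈ S.powersetCard (n + 1), ∑ i ∈ A, subsetProb S x (A.erase i) * x i := by
        refine sum_congr rfl fun A hA => ?_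
        obtain ⟨hAS, hAc⟩ := mem_powersetCard.mp hA
        have hcard : (n + 1 : R) = ∑ _i ∈ A, 1 := by simp [hAc]
        rw [hcard, ← sum_sub_distrib, mul_sum]
        exact sum_congr rfl fun i hi => subsetProb_mul_one_sub x hAS hi
    _ = ∑ B ∈ S.powersetCard n, ∑ i ∈ S \ B, subsetProb S x B * x i :=
        sum_powersetCard_succ_sum_erase S n fun B i => subsetProb S x B * x i
    _ = ∑ B ∈ S.powersetCard n, subsetProb S x B * ((∑ i ∈ S, x i) - ∑ i ∈ B, x i) := by
        refine sum_congr rfl fun B hB => ?_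
        rw [← mul_sum, sum_sdiff_eq_sub (mem_powersetCard.mp hB).1]

end SubsetProb

theorem stmt9_general {ι : Type*} [DecidableEq ι] (S : Finset ι) (x : ι → ℝ)
    (k : ℕ) (hk1 : 1 ≤ k) :
    (∑ A ∈ S.powersetCard k,
        (∏ i ∈ A, x i) * (∏ i ∈ S \ A, (1 - x i)) * ((k:ℝ) - ∑ i ∈ A, x i))
    - (∑ A ∈ S.powersetCard (k-1),
        (∏ i ∈ A, x i) * (∏ i ∈ S \ A, (1 - x i)) * (((k:ℝ)-1) - ∑ i ∈ A, x i))
    = (∑ A ∈ S.powersetCard (k-1), (∏ i ∈ A, x i) * (∏ i ∈ S \ A, (1 - x i)))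
        * ((∑ i ∈ S, x i) - ((k:ℝ)-1)) := by
  obtain ⟨n, rfl⟩ := Nat.exists_eq_add_of_le' hk1
  have h := sum_powersetCard_succ_subsetProb_mul S x n
  simp only [subsetProb] at h
  push_cast at h ⊢
  rw [h, sum_mul, ← sum_sub_distrib]
  refine sum_congr rfl fun B _ => ?_
  ring

theorem stmt9 {ι : Type*} [DecidableEq ι] (S : Finset ι) (x : ι → ℝ)
    (hx : ∀ i ∈ S, x i ∈ Set.Icc (0:ℝ) 1) (k : ℕ) (hk1 : 1 ≤ k) (hk2 : k ≤ S.card) :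
    (∑ A ∈ S.powersetCard k,
        (∏ i ∈ A, x i) * (∏ i ∈ S \ A, (1 - x i)) * ((k:ℝ) - ∑ i ∈ A, x i))
    - (∑ A ∈ S.powersetCard (k-1),
        (∏ i ∈ A, x i) * (∏ i ∈ S \ A, (1 - x i)) * (((k:ℝ)-1) - ∑ i ∈ A, x i))
    = (∑ A ∈ S.powersetCard (k-1), (∏ i ∈ A, x i) * (∏ i ∈ S \ A, (1 - x i)))
        * ((∑ i ∈ S, x i) - ((k:ℝ)-1)) :=
  stmt9_general S x k hk1
end

section
/- For n ≥ 2 and 1 ≤ k ≤ n−1, the function h_S^k on [0,1]^S with |S| = n−1 attains its maximum at the point (k/n, …, k/n), with maximum value k·C(n,k)·(1−k/n)^{n+1−k}·(k/n)^k. -/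
/-!
In any two coordinates `x i, x j` the function `h = h_S^k` has the form
`F (x i + x j) + G (x i + x j) * (x i * x j)`, so along each line `x i + x j = const` it is affine
in `x i * x j`. Hence at a maximiser on the cube that has the largest `∑ (x i)^2` among all
maximisers, all coordinates lying strictly between `0` and `1` are equal. Coordinates equal to `0`
(resp. `1`) can be deleted, replacing `(n, k)` by `(n - 1, k)` (resp. `(n - 1, k - 1)`), and at a
constant point `a` one has `h = k C(n-1,k) a^k (1-a)^(n-k)`, which AM-GM bounds by its value at
`a = k/n`. The claimed maximum `M(n, k)` does not decrease under `n ↦ n + 1` nor, by the symmetry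
`M(n, k) = M(n, n - k)`, under `(n, k) ↦ (n + 1, k + 1)`: the ratio reduces to the fact that
`(1 + 1/m)^(m+1)` decreases.
-/

open Finset Function

lemma pow_mul_one_sub_pow_le {a : ℝ} (ha0 : 0 ≤ a) (ha1 : a ≤ 1) {k n : ℕ} (hk : 0 < k)
    (hkn : k < n) :
    a ^ k * (1 - a) ^ (n - k) ≤ (k / n : ℝ) ^ k * (1 - k / n : ℝ) ^ (n - k) := by
  have hk' : (0 : ℝ) < k := by exact_mod_cast hk
  have hn : (0 : ℝ) < n := by exact_mod_cast hk.trans hkn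
  have hnk : ((n - k : ℕ) : ℝ) = n - k := Nat.cast_sub hkn.le
  have hnk' : (0 : ℝ) < n - k := by rw [← hnk]; exact_mod_cast Nat.sub_pos_of_lt hkn
  set t := a * n / k
  set t' := (1 - a) * n / (n - k)
  -- `s ≤ exp (s - 1)` for `s = t, t'`, whose weighted deviations from `1` cancel
  have key : t ^ k * t' ^ (n - k) ≤ 1 := by
    have hpow : ∀ (s : ℝ) (m : ℕ), 0 ≤ s → s ^ m ≤ Real.exp (m * (s - 1)) := fun s m hs => by
      rw [Real.exp_nat_mul]
      exact pow_le_pow_left₀ hs (by linarith [Real.add_one_le_exp (s - 1)]) m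
    have ht' : 0 ≤ t' := by simp only [t']; have := sub_nonneg.2 ha1; positivity
    calc t ^ k * t' ^ (n - k) ≤ Real.exp (k * (t - 1)) * Real.exp ((n - k : ℕ) * (t' - 1)) :=
          mul_le_mul (hpow t k (by positivity)) (hpow t' _ ht') (by positivity) (by positivity)
      _ = 1 := by
        rw [← Real.exp_add, Real.exp_eq_one_iff, hnk]
        simp only [t, t']
        field_simp
        ring
  have ht : k / n * t = a := by simp only [t]; field_simp
  have ht' : (1 - k / n) * t' = 1 - a := by simp only [t']; field_simp
  calc a ^ k * (1 - a) ^ (n - k) = (k / n * t) ^ k * ((1 - k / n) * t') ^ (n - k) := by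
        rw [ht, ht']
    _ = (k / n : ℝ) ^ k * (1 - k / n : ℝ) ^ (n - k) * (t ^ k * t' ^ (n - k)) := by
        rw [mul_pow, mul_pow, mul_mul_mul_comm]
    _ ≤ (k / n : ℝ) ^ k * (1 - k / n : ℝ) ^ (n - k) := by
        refine mul_le_of_le_one_right ?_ key
        have : (k / n : ℝ) ≤ 1 := (div_le_one hn).2 (by exact_mod_cast hkn.le)
        have := sub_nonneg.2 this
        positivity

lemma one_add_inv_pow_succ_le {t : ℕ} (ht : 0 < t) :
    (1 + 1 / (t + 1 : ℕ) : ℝ) ^ (t + 1 + 1) ≤ (1 + 1 / t : ℝ) ^ (t + 1) := by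
  have ht' : (0 : ℝ) < t := by exact_mod_cast ht
  set c : ℝ := 1 / (t * (t + 2))
  have hc0 : 0 ≤ c := by positivity
  have hA : (1 + 1 / t : ℝ) = (1 + 1 / (t + 1 : ℕ)) * (1 + c) := by
    simp only [c]; push_cast; field_simp; ring
  have hc : 1 + 1 / (t + 1 : ℕ) ≤ 1 + (t + 1 : ℕ) * c := by
    simp only [c]; push_cast
    rw [add_le_add_iff_left, mul_one_div, div_le_div_iff₀ (by positivity) (by positivity)]
    nlinarith
  calc (1 + 1 / (t + 1 : ℕ) : ℝ) ^ (t + 1 + 1)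
      = (1 + 1 / (t + 1 : ℕ) : ℝ) ^ (t + 1) * (1 + 1 / (t + 1 : ℕ)) := pow_succ _ _
    _ ≤ (1 + 1 / (t + 1 : ℕ) : ℝ) ^ (t + 1) * (1 + c) ^ (t + 1) :=
        mul_le_mul_of_nonneg_left (hc.trans (one_add_mul_le_pow (by linarith) _))
          (by positivity)
    _ = (1 + 1 / t : ℝ) ^ (t + 1) := by rw [hA, mul_pow]

lemma one_add_inv_pow_le_of_le {m m' : ℕ} (hm : 0 < m) (h : m ≤ m') :
    (1 + 1 / m' : ℝ) ^ (m' + 1) ≤ (1 + 1 / m : ℝ) ^ (m + 1) := by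
  obtain ⟨m, rfl⟩ := Nat.exists_eq_add_one_of_ne_zero hm.ne'
  obtain ⟨m', rfl⟩ := Nat.exists_eq_add_one_of_ne_zero (by omega : m' ≠ 0)
  have : Antitone fun m : ℕ => (1 + 1 / (m + 1 : ℕ) : ℝ) ^ (m + 1 + 1) :=
    antitone_nat_of_succ_le fun t => one_add_inv_pow_succ_le t.succ_pos
  exact this (by omega : m ≤ m')

section

variable {ι : Type*} [DecidableEq ι]

lemma sum_update_update_add {α β : Type*} [AddCommMonoid β] (g : α → β) {S : Finset ι} {i j : ι}
    (hi : i ∈ S) (hj : j ∈ S) (hij : i ≠ j) (x : ι → α) (a b : α) :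
    ∑ l ∈ S, g (update (update x i a) j b l) + (g (x i) + g (x j))
      = ∑ l ∈ S, g (x l) + (g a + g b) := by
  have hj' : j ∈ S.erase i := mem_erase.2 ⟨hij.symm, hj⟩
  rw [← add_sum_erase S _ hi, ← add_sum_erase _ _ hj', ← add_sum_erase S _ hi,
    ← add_sum_erase _ _ hj', sum_congr rfl fun l hl => ?_]
  · simp only [update_self, update_of_ne hij]
    abel
  · obtain ⟨hlj, hl'⟩ := mem_erase.1 hl
    rw [update_of_ne hlj, update_of_ne (mem_erase.1 hl').1]

lemma update_mem_Icc {x : ι → ℝ} (hx : x ∈ Set.Icc 0 1) {i : ι} {u : ℝ} (hu : u ∈ Set.Icc 0 1) :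
    update x i u ∈ Set.Icc 0 1 :=
  ⟨le_update_iff.2 ⟨hu.1, fun l _ => hx.1 l⟩, update_le_iff.2 ⟨hu.2, fun l _ => hx.2 l⟩⟩

lemma eq_of_isMaxOn_of_sum_sq_le {f : (ι → ℝ) → ℝ} {S : Finset ι} {w : ι → ℝ}
    (hw : w ∈ Set.Icc 0 1) (hmax : IsMaxOn f (Set.Icc 0 1) w)
    (htie : ∀ y ∈ Set.Icc 0 1, f y = f w → ∑ l ∈ S, y l ^ 2 ≤ ∑ l ∈ S, w l ^ 2)
    {i j : ι} (hi : i ∈ S) (hj : j ∈ S) (hij : i ≠ j)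
    (hpair : ∃ F G : ℝ → ℝ, ∀ u v : ℝ,
      f (update (update w i u) j v) = F (u + v) + G (u + v) * (u * v))
    (hwi : w i ∈ Set.Ioo 0 1) (hwj : w j ∈ Set.Ioo 0 1) : w i = w j := by
  by_contra hne
  obtain ⟨F, G, hFG⟩ := hpair
  obtain ⟨hi0, hi1⟩ := hwi
  obtain ⟨hj0, hj1⟩ := hwj
  set m := (w i + w j) / 2 with hm
  set δ := (w i - w j) / 2 with hδm
  have hδ : 0 < δ ^ 2 := by
    have : δ ≠ 0 := fun h => hne (by linarith)
    positivity
  set y : ℝ → ι → ℝ := fun t => update (update w i (m + t)) j (m - t)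
  have hfy : ∀ t, f (y t) = f w + G (w i + w j) * (δ ^ 2 - t ^ 2) := by
    intro t
    have hw' := hFG (w i) (w j)
    rw [update_eq_self, update_eq_self] at hw'
    rw [hFG, hw', show m + t + (m - t) = w i + w j by ring]
    ring
  have hy : ∀ t, 0 ≤ t → t ≤ m → t ≤ 1 - m → y t ∈ Set.Icc 0 1 := fun t h0 h1 h2 =>
    update_mem_Icc (update_mem_Icc hw ⟨by linarith, by linarith⟩) ⟨by linarith, by linarith⟩
  rcases lt_or_ge 0 (G (w i + w j)) with hG | hG
  · have h0 := isMaxOn_iff.1 hmax _ (hy 0 le_rfl (by linarith) (by linarith))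
    rw [hfy] at h0
    nlinarith
  · -- spreading the two coordinates apart keeps `f` maximal and increases the sum of squares
    set d := min m (1 - m) with hdm
    have hd : δ ^ 2 < d ^ 2 := by
      rcases min_cases m (1 - m) with ⟨h, -⟩ | ⟨h, -⟩ <;> rw [hdm, h] <;> nlinarith
    have hyd := hy d (le_min (by linarith) (by linarith)) (min_le_left _ _) (min_le_right _ _)
    have hfyd : f (y d) = f w :=
      le_antisymm (isMaxOn_iff.1 hmax _ hyd) (by rw [hfy]; nlinarith)
    have hsq := htie _ hyd hfyd
    have := sum_update_update_add (· ^ 2) hi hj hij w (m + d) (m - d)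
    simp only [y] at hsq
    nlinarith

theorem exists_isMaxOn_Icc_pairwise_eq {f : (ι → ℝ) → ℝ} (hf : Continuous f) (S : Finset ι)
    (hpair : ∀ x : ι → ℝ, ∀ i ∈ S, ∀ j ∈ S, i ≠ j → ∃ F G : ℝ → ℝ, ∀ u v : ℝ,
      f (update (update x i u) j v) = F (u + v) + G (u + v) * (u * v)) :
    ∃ w ∈ Set.Icc (0 : ι → ℝ) 1, IsMaxOn f (Set.Icc 0 1) w ∧
      ∀ i ∈ S, ∀ j ∈ S, w i ∈ Set.Ioo 0 1 → w j ∈ Set.Ioo 0 1 → w i = w j := by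
  obtain ⟨z, hz, hzmax⟩ :=
    isCompact_Icc.exists_isMaxOn (Set.nonempty_Icc.2 zero_le_one) hf.continuousOn
  have hM : IsCompact {y ∈ Set.Icc (0 : ι → ℝ) 1 | f y = f z} :=
    isCompact_Icc.inter_right (isClosed_eq hf continuous_const)
  obtain ⟨w, ⟨hw, hwz⟩, hwmax⟩ := hM.exists_isMaxOn ⟨z, hz, rfl⟩
    (continuous_finsetSum S fun l _ => (continuous_apply l).pow 2).continuousOn
  have hmax : IsMaxOn f (Set.Icc 0 1) w :=
    isMaxOn_iff.2 fun y hy => (isMaxOn_iff.1 hzmax y hy).trans_eq hwz.symm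
  refine ⟨w, hw, hmax, fun i hi j hj hwi hwj => ?_⟩
  rcases eq_or_ne i j with rfl | hij
  · rfl
  exact eq_of_isMaxOn_of_sum_sq_le hw hmax
    (fun y hy hfy => isMaxOn_iff.1 hwmax y ⟨hy, hfy.trans hwz⟩) hi hj hij
    (hpair w i hi j hj hij) hwi hwj

lemma sum_powersetCard_succ_of_mem {β : Type*} [AddCommMonoid β] (f : Finset ι → β)
    {S : Finset ι} {i : ι} (hi : i ∈ S) (k : ℕ) :
    ∑ A ∈ S.powersetCard (k + 1), f A
      = ∑ A ∈ (S.erase i).powersetCard (k + 1), f A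
        + ∑ A ∈ (S.erase i).powersetCard k, f (insert i A) := by
  have hi' : i ∉ S.erase i := notMem_erase i S
  conv_lhs => rw [← insert_erase hi, powersetCard_succ_insert hi']
  rw [sum_union, sum_image]
  · intro A hA B hB hAB
    have hiA : i ∉ A := fun h => hi' ((mem_powersetCard.1 hA).1 h)
    have hiB : i ∉ B := fun h => hi' ((mem_powersetCard.1 hB).1 h)
    rw [← erase_insert hiA, ← erase_insert hiB, hAB]
  · refine disjoint_left.2 fun A hA hA' => ?_
    obtain ⟨B, -, rfl⟩ := mem_image.1 hA'
    exact hi' ((mem_powersetCard.1 hA).1 (mem_insert_self i B))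

lemma sdiff_eq_insert_sdiff_erase {S A : Finset ι} {i : ι} (hi : i ∈ S) (hA : A ⊆ S.erase i) :
    S \ A = insert i (S.erase i \ A) := by
  rw [erase_sdiff_comm, insert_erase (mem_sdiff.2 ⟨hi, fun h => notMem_erase i S (hA h)⟩)]

lemma sdiff_insert_eq_erase_sdiff {S A : Finset ι} {i : ι} : S \ insert i A = S.erase i \ A := by
  rw [sdiff_insert, erase_sdiff_comm]

namespace CardDefect

-- `defect S k x` is `h_S^k(x)`, and `cardProb S k x` is the probability that a random subset of
-- `S`, containing each `i` independently with probability `x i`, has exactly `k` elements.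
noncomputable def cardProb (S : Finset ι) (k : ℕ) (x : ι → ℝ) : ℝ :=
  ∑ A ∈ S.powersetCard k, (∏ i ∈ A, x i) * ∏ i ∈ S \ A, (1 - x i)

noncomputable def defect (S : Finset ι) (k : ℕ) (x : ι → ℝ) : ℝ :=
  ∑ A ∈ S.powersetCard k, (∏ i ∈ A, x i) * (∏ i ∈ S \ A, (1 - x i)) * ((k : ℝ) - ∑ i ∈ A, x i)

variable {S : Finset ι} {k : ℕ} {x y : ι → ℝ} {i j : ι}

lemma cardProb_congr (h : ∀ i ∈ S, x i = y i) : cardProb S k x = cardProb S k y := by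
  refine sum_congr rfl fun A hA => ?_
  have hAS := (mem_powersetCard.1 hA).1
  rw [prod_congr rfl fun i hi => h i (hAS hi),
    prod_congr rfl fun i hi => congrArg (1 - ·) (h i (mem_sdiff.1 hi).1)]

lemma defect_congr (h : ∀ i ∈ S, x i = y i) : defect S k x = defect S k y := by
  refine sum_congr rfl fun A hA => ?_
  have hAS := (mem_powersetCard.1 hA).1
  rw [prod_congr rfl fun i hi => h i (hAS hi),
    prod_congr rfl fun i hi => congrArg (1 - ·) (h i (mem_sdiff.1 hi).1),
    sum_congr rfl fun i hi => h i (hAS hi)]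

@[simp] lemma defect_zero (S : Finset ι) (x : ι → ℝ) : defect S 0 x = 0 := by
  simp [defect]

lemma defect_of_card_lt (h : S.card < k) : defect S k x = 0 := by
  rw [defect, powersetCard_eq_empty.2 h, sum_empty]

lemma cardProb_zero_of_mem (x : ι → ℝ) (hi : i ∈ S) :
    cardProb S 0 x = (1 - x i) * cardProb (S.erase i) 0 x := by
  simp [cardProb, mul_prod_erase S (fun j => 1 - x j) hi]

lemma cardProb_succ_of_mem (x : ι → ℝ) (hi : i ∈ S) (k : ℕ) :
    cardProb S (k + 1) x
      = (1 - x i) * cardProb (S.erase i) (k + 1) x + x i * cardProb (S.erase i) k x := by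
  rw [cardProb, sum_powersetCard_succ_of_mem _ hi, cardProb, cardProb, mul_sum, mul_sum]
  congr 1 <;> refine sum_congr rfl fun A hA => ?_
  · rw [sdiff_eq_insert_sdiff_erase hi (mem_powersetCard.1 hA).1, prod_insert (by simp)]
    ring
  · have hiA : i ∉ A := fun h => notMem_erase i S ((mem_powersetCard.1 hA).1 h)
    rw [prod_insert hiA, sdiff_insert_eq_erase_sdiff]
    ring

lemma defect_succ_of_mem (x : ι → ℝ) (hi : i ∈ S) (k : ℕ) :
    defect S (k + 1) x
      = (1 - x i) * defect (S.erase i) (k + 1) x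
        + x i * (defect (S.erase i) k x + (1 - x i) * cardProb (S.erase i) k x) := by
  rw [defect, sum_powersetCard_succ_of_mem _ hi, defect, defect, cardProb]
  conv_rhs => simp only [mul_sum, ← sum_add_distrib]
  push_cast
  congr 1 <;> refine sum_congr rfl fun A hA => ?_
  · rw [sdiff_eq_insert_sdiff_erase hi (mem_powersetCard.1 hA).1, prod_insert (by simp)]
    ring
  · have hiA : i ∉ A := fun h => notMem_erase i S ((mem_powersetCard.1 hA).1 h)
    rw [prod_insert hiA, sum_insert hiA, sdiff_insert_eq_erase_sdiff]
    ring

theorem exists_defect_update_update_eq (x : ι → ℝ) (hi : i ∈ S) (hj : j ∈ S) (hij : i ≠ j)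
    (hk : 1 ≤ k) : ∃ F G : ℝ → ℝ, ∀ u v : ℝ,
      defect S k (update (update x i u) j v) = F (u + v) + G (u + v) * (u * v) := by
  have hj' : j ∈ S.erase i := mem_erase.2 ⟨hij.symm, hj⟩
  set T := (S.erase i).erase j
  have hT : ∀ u v, ∀ l ∈ T, update (update x i u) j v l = x l := by
    intro u v l hl
    obtain ⟨hlj, hl'⟩ := mem_erase.1 hl
    rw [update_of_ne hlj, update_of_ne (mem_erase.1 hl').1]
  obtain ⟨m, rfl⟩ : ∃ m, k = m + 1 := ⟨k - 1, by omega⟩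
  rcases m with _ | l
  · refine ⟨fun s => defect T 1 x + (cardProb T 0 x - defect T 1 x) * s - cardProb T 0 x * s ^ 2,
      fun s => defect T 1 x + cardProb T 0 x * s, fun u v => ?_⟩
    rw [defect_succ_of_mem _ hi, defect_succ_of_mem _ hj', cardProb_zero_of_mem _ hj',
      defect_zero, defect_zero, defect_congr (hT u v), cardProb_congr (hT u v)]
    simp only [update_self, update_of_ne hij]
    ring
  · refine ⟨fun s => defect T (l + 2) x
        + (cardProb T (l + 1) x + defect T (l + 1) x - defect T (l + 2) x) * s
        - cardProb T (l + 1) x * s ^ 2,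
      fun s => defect T (l + 2) x - 2 * defect T (l + 1) x + defect T l x + 2 * cardProb T l x
        + (cardProb T (l + 1) x - cardProb T l x) * s, fun u v => ?_⟩
    rw [defect_succ_of_mem _ hi, defect_succ_of_mem _ hj', defect_succ_of_mem _ hj',
      cardProb_succ_of_mem _ hj']
    simp only [update_self, update_of_ne hij]
    rw [defect_congr (k := l + 2) (hT u v), defect_congr (k := l + 1) (hT u v),
      defect_congr (k := l) (hT u v), cardProb_congr (k := l + 1) (hT u v),
      cardProb_congr (k := l) (hT u v)]
    ring

lemma continuous_defect (S : Finset ι) (k : ℕ) : Continuous (defect S k) := by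
  unfold defect
  fun_prop

lemma defect_of_eq_zero (hi : i ∈ S) (hx : x i = 0) (k : ℕ) :
    defect S k x = defect (S.erase i) k x := by
  cases k with
  | zero => simp
  | succ m => rw [defect_succ_of_mem x hi m, hx]; ring

lemma defect_succ_of_eq_one (hi : i ∈ S) (hx : x i = 1) (k : ℕ) :
    defect S (k + 1) x = defect (S.erase i) k x := by
  rw [defect_succ_of_mem x hi k, hx]; ring

lemma defect_const {a : ℝ} (hx : ∀ i ∈ S, x i = a) (hk : k ≤ S.card) :
    defect S k x = k * S.card.choose k * a ^ k * (1 - a) ^ (S.card + 1 - k) := by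
  have hterm : ∀ A ∈ S.powersetCard k,
      (∏ i ∈ A, x i) * (∏ i ∈ S \ A, (1 - x i)) * ((k : ℝ) - ∑ i ∈ A, x i)
        = k * a ^ k * (1 - a) ^ (S.card + 1 - k) := by
    intro A hA
    obtain ⟨hAS, hAk⟩ := mem_powersetCard.1 hA
    rw [prod_congr rfl fun i hi => hx i (hAS hi),
      prod_congr rfl fun i hi => congrArg (1 - ·) (hx i (mem_sdiff.1 hi).1),
      sum_congr rfl fun i hi => hx i (hAS hi), prod_const, prod_const, sum_const,
      card_sdiff_of_subset hAS, hAk, nsmul_eq_mul, show S.card + 1 - k = S.card - k + 1 by omega,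
      pow_succ]
    ring
  rw [defect, sum_congr rfl hterm, sum_const, card_powersetCard, nsmul_eq_mul]
  ring

noncomputable def maxDefect (n k : ℕ) : ℝ :=
  k * n.choose k * (1 - k / n) ^ (n + 1 - k) * (k / n) ^ k

lemma maxDefect_eq {n k j : ℕ} (h : k + j = n) :
    maxDefect n k = k * n.choose k * (j / n : ℝ) ^ (j + 1) * (k / n : ℝ) ^ k := by
  rcases Nat.eq_zero_or_pos n with rfl | hn
  · obtain ⟨rfl, rfl⟩ : k = 0 ∧ j = 0 := by omega
    simp [maxDefect]
  have hn' : (n : ℝ) ≠ 0 := by positivity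
  rw [maxDefect, show n + 1 - k = j + 1 by omega,
    show (1 - k / n : ℝ) = j / n by field_simp; rw [← h]; push_cast; ring]

lemma maxDefect_nonneg {n k : ℕ} (h : k ≤ n) : 0 ≤ maxDefect n k := by
  rw [maxDefect_eq (Nat.add_sub_cancel' h)]
  positivity

lemma maxDefect_symm {n k : ℕ} (h : k ≤ n) : maxDefect n (n - k) = maxDefect n k := by
  rw [maxDefect_eq (Nat.add_sub_cancel' h), maxDefect_eq (Nat.sub_add_cancel h),
    Nat.choose_symm h, Nat.cast_sub h]
  ring

lemma maxDefect_le_succ {n k : ℕ} (hk : k < n) : maxDefect n k ≤ maxDefect (n + 1) k := by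
  obtain ⟨j, hj⟩ : ∃ j, k + j = n := ⟨n - k, by omega⟩
  have hn : (0 : ℝ) < n := by exact_mod_cast (show 0 < n by omega)
  have hj0 : (0 : ℝ) < j := by exact_mod_cast (show 0 < j by omega)
  have hn1 : (n + 1 : ℝ) ≠ 0 := by positivity
  have hj1 : (j + 1 : ℝ) ≠ 0 := by positivity
  have hC : ((n + 1).choose k : ℝ) = n.choose k * (n + 1) / (j + 1) := by
    have h := Nat.choose_mul_succ_eq n k
    rw [show n + 1 - k = j + 1 by omega] at h
    rw [eq_div_iff hj1]
    exact_mod_cast h.symm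
  have key : maxDefect (n + 1) k * (1 + 1 / n : ℝ) ^ (n + 1)
      = maxDefect n k * (1 + 1 / j : ℝ) ^ (j + 1) := by
    rw [maxDefect_eq hj, maxDefect_eq (j := j + 1) (by omega), hC, one_add_div hn.ne',
      one_add_div hj0.ne', ← hj]
    push_cast
    simp only [div_pow]
    field_simp
    ring
  have hle := one_add_inv_pow_le_of_le (m := j) (m' := n) (by omega) (by omega)
  nlinarith [maxDefect_nonneg hk.le, maxDefect_nonneg (show k ≤ n + 1 by omega),
    pow_pos (show (0 : ℝ) < 1 + 1 / n by positivity) (n + 1)]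

lemma maxDefect_le_succ_succ {n k : ℕ} (hk0 : 0 < k) (hk : k < n) :
    maxDefect n k ≤ maxDefect (n + 1) (k + 1) := by
  calc maxDefect n k = maxDefect n (n - k) := (maxDefect_symm hk.le).symm
    _ ≤ maxDefect (n + 1) (n - k) := maxDefect_le_succ (by omega)
    _ = maxDefect (n + 1) (k + 1) := by
      rw [← maxDefect_symm (show n - k ≤ n + 1 by omega), show n + 1 - (n - k) = k + 1 by omega]

lemma mul_choose_mul_pow_eq_maxDefect {N k : ℕ} (hk : k ≤ N) :
    k * N.choose k * (k / (N + 1 : ℕ) : ℝ) ^ k * (1 - k / (N + 1 : ℕ) : ℝ) ^ (N + 1 - k)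
      = maxDefect (N + 1) k := by
  have hN : ((N + 1 : ℕ) : ℝ) ≠ 0 := by positivity
  have hC : (N.choose k : ℝ) = (N + 1).choose k * (1 - k / (N + 1 : ℕ)) := by
    have h := congrArg (Nat.cast (R := ℝ)) (Nat.choose_mul_succ_eq N k)
    push_cast [Nat.cast_sub (show k ≤ N + 1 by omega)] at h
    field_simp
    push_cast
    linarith
  rw [maxDefect, hC, show N + 1 + 1 - k = N + 1 - k + 1 by omega, pow_succ]
  ring

lemma mul_choose_mul_pow_le_maxDefect {N k : ℕ} {a : ℝ} (ha0 : 0 ≤ a) (ha1 : a ≤ 1)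
    (hk : 0 < k) (hkN : k ≤ N) :
    k * N.choose k * a ^ k * (1 - a) ^ (N + 1 - k) ≤ maxDefect (N + 1) k := by
  rw [← mul_choose_mul_pow_eq_maxDefect hkN, mul_assoc _ (a ^ k), mul_assoc _ (_ ^ k)]
  exact mul_le_mul_of_nonneg_left (pow_mul_one_sub_pow_le ha0 ha1 hk (by omega)) (by positivity)

theorem defect_le_maxDefect (hx : ∀ i ∈ S, x i ∈ Set.Icc 0 1)
    (hint : ∀ i ∈ S, ∀ j ∈ S, x i ∈ Set.Ioo 0 1 → x j ∈ Set.Ioo 0 1 → x i = x j)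
    (hk : 0 < k) (hkS : k ≤ S.card) : defect S k x ≤ maxDefect (S.card + 1) k := by
  induction S using Finset.strongInduction generalizing k with
  | H S ih =>
  have ih' : ∀ i ∈ S, ∀ m, 0 < m → m ≤ (S.erase i).card →
      defect (S.erase i) m x ≤ maxDefect ((S.erase i).card + 1) m := fun i hi m hm hmS =>
    ih _ (erase_ssubset hi) (fun l hl => hx l (mem_of_mem_erase hl))
      (fun l hl l' hl' => hint l (mem_of_mem_erase hl) l' (mem_of_mem_erase hl')) hm hmS
  by_cases h0 : ∃ i ∈ S, x i = 0
  · obtain ⟨i, hi, hxi⟩ := h0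
    have hcard := card_erase_add_one hi
    rw [defect_of_eq_zero hi hxi, ← hcard]
    rcases hkS.lt_or_eq with hlt | heq
    · exact (ih' i hi k hk (by omega)).trans (maxDefect_le_succ (by omega))
    · rw [defect_of_card_lt (by omega)]
      exact maxDefect_nonneg (by omega)
  by_cases h1 : ∃ i ∈ S, x i = 1
  · obtain ⟨i, hi, hxi⟩ := h1
    obtain ⟨m, rfl⟩ : ∃ m, k = m + 1 := ⟨k - 1, by omega⟩
    have hcard := card_erase_add_one hi
    rw [defect_succ_of_eq_one hi hxi, ← hcard]
    rcases Nat.eq_zero_or_pos m with rfl | hm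
    · rw [defect_zero]
      exact maxDefect_nonneg (by omega)
    · exact (ih' i hi m hm (by omega)).trans (maxDefect_le_succ_succ hm (by omega))
  push Not at h0 h1
  have hIoo : ∀ i ∈ S, x i ∈ Set.Ioo 0 1 := fun i hi =>
    ⟨(hx i hi).1.lt_of_ne (h0 i hi).symm, (hx i hi).2.lt_of_ne (h1 i hi)⟩
  obtain ⟨i₀, hi₀⟩ : S.Nonempty := card_pos.1 (by omega)
  rw [defect_const (fun i hi => hint i hi i₀ hi₀ (hIoo i hi) (hIoo i₀ hi₀)) hkS]
  exact mul_choose_mul_pow_le_maxDefect (hx i₀ hi₀).1 (hx i₀ hi₀).2 hk hkS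

end CardDefect

end

open CardDefect

theorem stmt17_general {ι : Type*} [DecidableEq ι] (S : Finset ι) (n k : ℕ)
    (hS : S.card = n - 1) (hk1 : 1 ≤ k) (hk2 : k ≤ n - 1) :
    (∀ x : ι → ℝ, (∀ i ∈ S, x i ∈ Set.Icc (0:ℝ) 1) →
      ∑ A ∈ S.powersetCard k,
          (∏ i ∈ A, x i) * (∏ i ∈ S \ A, (1 - x i)) * ((k:ℝ) - ∑ i ∈ A, x i)
        ≤ (k:ℝ) * (n.choose k : ℝ) * (1 - (k:ℝ)/n)^(n+1-k) * ((k:ℝ)/n)^k)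
    ∧ (∑ A ∈ S.powersetCard k,
          (∏ i ∈ A, ((k:ℝ)/n)) * (∏ i ∈ S \ A, (1 - (k:ℝ)/n))
            * ((k:ℝ) - ∑ i ∈ A, ((k:ℝ)/n))
        = (k:ℝ) * (n.choose k : ℝ) * (1 - (k:ℝ)/n)^(n+1-k) * ((k:ℝ)/n)^k) := by
  obtain rfl : n = S.card + 1 := by omega
  refine ⟨fun x hx => ?_, ?_⟩
  · show defect S k x ≤ maxDefect (S.card + 1) k
    obtain ⟨w, hw, hmax, hint⟩ := exists_isMaxOn_Icc_pairwise_eq (continuous_defect S k) S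
      fun y i hi j hj hij => exists_defect_update_update_eq y hi hj hij hk1
    have hx' : S.piecewise x 0 ∈ Set.Icc 0 1 := by
      constructor <;> intro i <;> by_cases hi : i ∈ S <;> simp [hi, (hx i _).1, (hx i _).2]
    calc defect S k x = defect S k (S.piecewise x 0) :=
          defect_congr fun i hi => (S.piecewise_eq_of_mem x 0 hi).symm
      _ ≤ defect S k w := isMaxOn_iff.1 hmax _ hx'
      _ ≤ maxDefect (S.card + 1) k :=
          defect_le_maxDefect (fun i _ => ⟨hw.1 i, hw.2 i⟩) hint hk1 (by omega)
  · show defect S k (fun _ => (k : ℝ) / (S.card + 1 : ℕ)) = maxDefect (S.card + 1) k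
    rw [defect_const (fun _ _ => rfl) (by omega), mul_choose_mul_pow_eq_maxDefect (by omega)]

theorem stmt17 {ι : Type*} [DecidableEq ι] (S : Finset ι) (n k : ℕ)
    (hS : S.card = n - 1) (hn : 2 ≤ n) (hk1 : 1 ≤ k) (hk2 : k ≤ n - 1) :
    (∀ x : ι → ℝ, (∀ i ∈ S, x i ∈ Set.Icc (0:ℝ) 1) →
      ∑ A ∈ S.powersetCard k,
          (∏ i ∈ A, x i) * (∏ i ∈ S \ A, (1 - x i)) * ((k:ℝ) - ∑ i ∈ A, x i)
        ≤ (k:ℝ) * (n.choose k : ℝ) * (1 - (k:ℝ)/n)^(n+1-k) * ((k:ℝ)/n)^k)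
    ∧ (∑ A ∈ S.powersetCard k,
          (∏ i ∈ A, ((k:ℝ)/n)) * (∏ i ∈ S \ A, (1 - (k:ℝ)/n))
            * ((k:ℝ) - ∑ i ∈ A, ((k:ℝ)/n))
        = (k:ℝ) * (n.choose k : ℝ) * (1 - (k:ℝ)/n)^(n+1-k) * ((k:ℝ)/n)^k) :=
  stmt17_general S n k hS hk1 hk2
end

section
/- Let N be a finite set of size n ≥ 2, 1 ≤ k ≤ n−1, and x ∈ [0,1]^N with x_i = k/n for all i. Let R be a random subset of N where each element is included independently with probability k/n. Then E[min(|R|, k)] = k·(1 − C(n,k)·(1−k/n)^{n+1−k}·(k/n)^k). -/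
/-!
The size `X = |R|` is binomial with parameters `n` and `p = k / n`. Since `min X k = k - (k - X)⁺`,
it suffices to compute the expected shortfall `∑_{j < k} (k - j) P(X = j)`. Because `n p = k`,
the weight `k - j` equals `n p - j`, and `∑_{j < k} (n p - j) P(X = j)` telescopes to
`k C(n, k) p^k (1 - p)^(n + 1 - k)` for every `p`.
-/

open Finset

section Binomial

variable {R : Type*} [CommRing R]

def binomialWeight (n : ℕ) (p : R) (j : ℕ) : R := n.choose j * p ^ j * (1 - p) ^ (n - j)

theorem binomialWeight_eq_zero_of_lt {n j : ℕ} (p : R) (h : n < j) : binomialWeight n p j = 0 := by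
  simp [binomialWeight, Nat.choose_eq_zero_of_lt h]

theorem sum_binomialWeight (n : ℕ) (p : R) : ∑ j ∈ range (n + 1), binomialWeight n p j = 1 := by
  have h := add_pow p (1 - p) n
  rw [add_sub_cancel, one_pow] at h
  rw [h]
  exact sum_congr rfl fun j _ => by rw [binomialWeight]; ring

/-- The left-hand side telescopes: the `j`-th term is `t (j + 1) - t j` with
`t j = j * C(n, j) * p ^ j * (1 - p) ^ (n + 1 - j)`. -/
theorem sum_range_mul_binomialWeight (n k : ℕ) (p : R) :
    ∑ j ∈ range k, ((n : R) * p - j) * binomialWeight n p j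
      = k * n.choose k * p ^ k * (1 - p) ^ (n + 1 - k) := by
  induction k with
  | zero => simp
  | succ k ih =>
    rw [sum_range_succ, ih, binomialWeight]
    rcases lt_or_ge n k with hnk | hkn
    · simp [Nat.choose_eq_zero_of_lt hnk, Nat.choose_eq_zero_of_lt (Nat.lt_succ_of_lt hnk)]
    · have hchoose : (n.choose (k + 1) : R) * (k + 1) = n.choose k * (n - k) := by
        have h := congrArg (Nat.cast (R := R)) (Nat.choose_succ_right_eq n k)
        push_cast [Nat.cast_sub hkn] at h
        exact h
      rw [show n + 1 - k = n - k + 1 by omega, show n + 1 - (k + 1) = n - k by omega]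
      push_cast
      linear_combination -p ^ (k + 1) * (1 - p) ^ (n - k) * hchoose

theorem sum_binomialWeight_mul_tsub (n k : ℕ) (p : R) :
    ∑ j ∈ range (n + 1), binomialWeight n p j * ((k - j : ℕ) : R)
      = ∑ j ∈ range k, ((k : R) - j) * binomialWeight n p j := by
  calc ∑ j ∈ range (n + 1), binomialWeight n p j * ((k - j : ℕ) : R)
      = ∑ j ∈ range (n + 1 + k), binomialWeight n p j * ((k - j : ℕ) : R) := by
        refine sum_subset (range_subset_range.2 (by omega)) fun j _ hj => ?_
        rw [binomialWeight_eq_zero_of_lt p (by simpa using hj), zero_mul]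
    _ = ∑ j ∈ range k, binomialWeight n p j * ((k - j : ℕ) : R) := by
        refine (sum_subset (range_subset_range.2 (by omega)) fun j _ hj => ?_).symm
        rw [Nat.sub_eq_zero_of_le (by simpa using hj), Nat.cast_zero, mul_zero]
    _ = ∑ j ∈ range k, ((k : R) - j) * binomialWeight n p j :=
        sum_congr rfl fun j hj => by rw [Nat.cast_sub (mem_range.1 hj).le, mul_comm]

theorem sum_binomialWeight_mul_min {n k : ℕ} {p : R} (hp : (n : R) * p = k) :
    ∑ j ∈ range (n + 1), binomialWeight n p j * ((min j k : ℕ) : R)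
      = k * (1 - n.choose k * (1 - p) ^ (n + 1 - k) * p ^ k) := by
  have hmin : ∀ j, ((min j k : ℕ) : R) = k - ((k - j : ℕ) : R) := fun j => by
    rw [← Nat.cast_sub (Nat.sub_le k j)]
    congr 1
    omega
  calc ∑ j ∈ range (n + 1), binomialWeight n p j * ((min j k : ℕ) : R)
      = k * ∑ j ∈ range (n + 1), binomialWeight n p j
          - ∑ j ∈ range (n + 1), binomialWeight n p j * ((k - j : ℕ) : R) := by
        rw [mul_sum, ← sum_sub_distrib]
        exact sum_congr rfl fun j _ => by rw [hmin]; ring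
    _ = k - ∑ j ∈ range k, ((n : R) * p - j) * binomialWeight n p j := by
        rw [sum_binomialWeight, sum_binomialWeight_mul_tsub, hp, mul_one]
    _ = k * (1 - n.choose k * (1 - p) ^ (n + 1 - k) * p ^ k) := by
        rw [sum_range_mul_binomialWeight]; ring

end Binomial

theorem Finset.sum_powerset_prod_const_mul {ι R : Type*} [CommRing R] [DecidableEq ι]
    (N : Finset ι) (p : R) (f : ℕ → R) :
    ∑ A ∈ N.powerset, (∏ _i ∈ A, p) * (∏ _i ∈ N \ A, (1 - p)) * f #A
      = ∑ j ∈ range (#N + 1), binomialWeight #N p j * f j := by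
  calc ∑ A ∈ N.powerset, (∏ _i ∈ A, p) * (∏ _i ∈ N \ A, (1 - p)) * f #A
      = ∑ A ∈ N.powerset, p ^ #A * (1 - p) ^ (#N - #A) * f #A :=
        sum_congr rfl fun A hA => by
          rw [prod_const, prod_const, card_sdiff_of_subset (mem_powerset.1 hA)]
    _ = ∑ j ∈ range (#N + 1), binomialWeight #N p j * f j := by
        rw [sum_powerset_apply_card (fun j => p ^ j * (1 - p) ^ (#N - j) * f j)]
        exact sum_congr rfl fun j _ => by rw [nsmul_eq_mul, binomialWeight]; ring

theorem stmt18_general {ι : Type*} [DecidableEq ι] (N : Finset ι) (n k : ℕ)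
    (hN : N.card = n) (hn : 2 ≤ n) :
    ∑ A ∈ N.powerset,
        (∏ i ∈ A, ((k:ℝ)/n)) * (∏ i ∈ N \ A, (1 - (k:ℝ)/n)) * ((min A.card k : ℕ) : ℝ)
    = (k:ℝ) * (1 - (n.choose k : ℝ) * (1 - (k:ℝ)/n)^(n+1-k) * ((k:ℝ)/n)^k) := by
  have hp : (n : ℝ) * (k / n) = k := mul_div_cancel₀ _ (Nat.cast_ne_zero.2 (by omega))
  rw [sum_powerset_prod_const_mul N _ fun j => ((min j k : ℕ) : ℝ), hN]
  exact sum_binomialWeight_mul_min hp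

theorem stmt18 {ι : Type*} [DecidableEq ι] (N : Finset ι) (n k : ℕ)
    (hN : N.card = n) (hn : 2 ≤ n) (hk1 : 1 ≤ k) (hk2 : k ≤ n - 1) :
    ∑ A ∈ N.powerset,
        (∏ i ∈ A, ((k:ℝ)/n)) * (∏ i ∈ N \ A, (1 - (k:ℝ)/n)) * ((min A.card k : ℕ) : ℝ)
    = (k:ℝ) * (1 - (n.choose k : ℝ) * (1 - (k:ℝ)/n)^(n+1-k) * ((k:ℝ)/n)^k) :=
  stmt18_general N n k hN hn
end

section
/- Let N be a finite set, x ∈ [0,1]^N with ∑_i x_i ≤ k, and e, f distinct elements of N. For a finite set A with e ∈ A ⊆ N, f ∉ A, |A| ≥ k, define M(A) = (k − x_e)/|A| + x(A\{e})/(|A|(|A|−1)). Then M(A) ≥ M(A ∪ {f}); i.e., (k − x_e − x_f)/(|A|(|A|+1)) + 2·x(A\{e})/((|A|²−1)·|A|) ≥ 0 and equals M(A) − M(A∪{f}). -/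
/-!
Write `n = |A|`, `c = k - x_e` and `S = x(A \ {e})`. Adding `f` to `A` turns `n` into `n + 1` and
`S` into `S + x_f`, so `M(A) - M(A ∪ {f})` is a rational function of `n`, `c`, `x_f`, `S` that
simplifies to the claimed expression. Both of its terms are nonnegative: `S ≥ 0` since `x ≥ 0`, and
`c - x_f = k - x_e - x_f ≥ k - x(N) ≥ 0`.
-/

open Finset

-- At `n = 1` Lean's division by `n - 1 = 0` gives `0` on both sides, which matches only if `S = 0`.
lemma marginal_sub_marginal_succ {c y S n : ℝ} (hn : 1 ≤ n) (hS : n = 1 → S = 0) :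
    c / n + S / (n * (n - 1)) - (c / (n + 1) + (y + S) / ((n + 1) * (n + 1 - 1)))
      = (c - y) / (n * (n + 1)) + 2 * S / ((n ^ 2 - 1) * n) := by
  rcases hn.eq_or_lt with rfl | hn
  · rw [hS rfl]
    ring
  · have : n ≠ 0 := by linarith
    have : n - 1 ≠ 0 := by linarith
    have : n ^ 2 - 1 ≠ 0 := by nlinarith
    rw [add_sub_cancel_right]
    field_simp
    ring

lemma marginal_gap_nonneg {c y S n : ℝ} (hn : 1 ≤ n) (hyc : y ≤ c) (hS : 0 ≤ S) :
    0 ≤ (c - y) / (n * (n + 1)) + 2 * S / ((n ^ 2 - 1) * n) := by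
  have : 0 ≤ n ^ 2 - 1 := by nlinarith
  have : 0 ≤ c - y := by linarith
  positivity

lemma Finset.card_union_singleton_of_notMem {ι : Type*} [DecidableEq ι] {A : Finset ι} {f : ι}
    (hf : f ∉ A) : #(A ∪ {f}) = #A + 1 := by
  rw [union_singleton, card_insert_of_notMem hf]

lemma Finset.sum_erase_union_singleton {ι M : Type*} [DecidableEq ι] [AddCommMonoid M]
    {A : Finset ι} {e f : ι} (hef : e ≠ f) (hf : f ∉ A) (x : ι → M) :
    ∑ i ∈ (A ∪ {f}).erase e, x i = x f + ∑ i ∈ A.erase e, x i := by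
  rw [union_singleton, erase_insert_of_ne hef.symm,
    sum_insert fun h => hf (mem_of_mem_erase h)]

lemma Finset.sum_erase_eq_zero_of_card_eq_one {ι M : Type*} [DecidableEq ι] [AddCommMonoid M]
    {A : Finset ι} {e : ι} (he : e ∈ A) (hA : #A = 1) (x : ι → M) : ∑ i ∈ A.erase e, x i = 0 := by
  have : #(A.erase e) = 0 := by rw [card_erase_of_mem he, hA]
  rw [card_eq_zero.mp this, sum_empty]

lemma Finset.add_le_sum_of_mem {ι M : Type*} [DecidableEq ι] [AddCommMonoid M] [PartialOrder M]
    [IsOrderedAddMonoid M] {N : Finset ι} {x : ι → M}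
    (hx : ∀ i ∈ N, 0 ≤ x i) {e f : ι} (hef : e ≠ f) (he : e ∈ N) (hf : f ∈ N) :
    x e + x f ≤ ∑ i ∈ N, x i := by
  rw [← sum_pair hef]
  exact sum_le_sum_of_subset_of_nonneg (insert_subset he (singleton_subset_iff.mpr hf))
    fun i hi _ => hx i hi

theorem stmt19_general {ι : Type*} [DecidableEq ι] (N : Finset ι) (k : ℕ) (x : ι → ℝ)
    (hx : ∀ i ∈ N, x i ∈ Set.Icc (0:ℝ) 1) (hsum : ∑ i ∈ N, x i ≤ (k:ℝ))
    (e f : ι) (hef : e ≠ f) (hfN : f ∈ N)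
    (A : Finset ι) (he : e ∈ A) (hA : A ⊆ N) (hfA : f ∉ A) :
    ((((k:ℝ) - x e)/(A.card : ℝ)
        + (∑ i ∈ A.erase e, x i)/((A.card : ℝ) * ((A.card : ℝ) - 1)))
      - (((k:ℝ) - x e)/(((A ∪ {f}).card : ℝ))
        + (∑ i ∈ (A ∪ {f}).erase e, x i)
            /(((A ∪ {f}).card : ℝ) * (((A ∪ {f}).card : ℝ) - 1)))
      = ((k:ℝ) - x e - x f)/((A.card : ℝ) * ((A.card : ℝ) + 1))
        + 2*(∑ i ∈ A.erase e, x i)/((((A.card : ℝ))^2 - 1) * (A.card : ℝ)))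
    ∧ 0 ≤ ((k:ℝ) - x e - x f)/((A.card : ℝ) * ((A.card : ℝ) + 1))
        + 2*(∑ i ∈ A.erase e, x i)/((((A.card : ℝ))^2 - 1) * (A.card : ℝ)) := by
  have hx0 : ∀ i ∈ N, 0 ≤ x i := fun i hi => (hx i hi).1
  have hn : (1 : ℝ) ≤ #A := by exact_mod_cast card_pos.mpr ⟨e, he⟩
  have hS : 0 ≤ ∑ i ∈ A.erase e, x i :=
    sum_nonneg fun i hi => hx0 i (hA (mem_of_mem_erase hi))
  have hxf : x f ≤ k - x e := by
    linarith [add_le_sum_of_mem hx0 hef (hA he) hfN]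
  rw [card_union_singleton_of_notMem hfA, sum_erase_union_singleton hef hfA, Nat.cast_add_one]
  refine ⟨marginal_sub_marginal_succ hn fun h1 => ?_, marginal_gap_nonneg hn hxf hS⟩
  exact sum_erase_eq_zero_of_card_eq_one he (by exact_mod_cast h1) x

theorem stmt19 {ι : Type*} [DecidableEq ι] (N : Finset ι) (k : ℕ) (x : ι → ℝ)
    (hx : ∀ i ∈ N, x i ∈ Set.Icc (0:ℝ) 1) (hsum : ∑ i ∈ N, x i ≤ (k:ℝ))
    (e f : ι) (hef : e ≠ f) (hfN : f ∈ N)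
    (A : Finset ι) (he : e ∈ A) (hA : A ⊆ N) (hfA : f ∉ A) (hAk : k ≤ A.card) :
    ((((k:ℝ) - x e)/(A.card : ℝ)
        + (∑ i ∈ A.erase e, x i)/((A.card : ℝ) * ((A.card : ℝ) - 1)))
      - (((k:ℝ) - x e)/(((A ∪ {f}).card : ℝ))
        + (∑ i ∈ (A ∪ {f}).erase e, x i)
            /(((A ∪ {f}).card : ℝ) * (((A ∪ {f}).card : ℝ) - 1)))
      = ((k:ℝ) - x e - x f)/((A.card : ℝ) * ((A.card : ℝ) + 1))
        + 2*(∑ i ∈ A.erase e, x i)/((((A.card : ℝ))^2 - 1) * (A.card : ℝ)))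
    ∧ 0 ≤ ((k:ℝ) - x e - x f)/((A.card : ℝ) * ((A.card : ℝ) + 1))
        + 2*(∑ i ∈ A.erase e, x i)/((((A.card : ℝ))^2 - 1) * (A.card : ℝ)) :=
  stmt19_general N k x hx hsum e f hef hfN A he hA hfA
end
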